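/- arXiv:1608.08474 — 3 statements merged into one kernel-verified Lean document; each statement's English description precedes it below -/
import Mathlib

section
/- Let 𝒴 be a finite nonempty set, let q be a pmf on 𝒴 with q(y) > 0 for all y, let N ≥ 1, and let p be any pmf on 𝒴^N. Then D(p ‖ q^{⊗N}) ≤ N · log₂(1/μ_q) · √(2 ln 2) · √(D(q^{⊗N} ‖ p)), where q^{⊗N} denotes the N-fold product pmf of q and μ_q = min_{y∈𝒴} q(y). (Claim established in Appendix B of the paper, showing each encoding block performs resolvability-achieving random number generation; it uses that the minimum mass of q^{⊗N} equals μ_q^N.) -/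
/-!
Write `Q = q^{⊗N}`; all its masses are at least `m = μ_q ^ N`. In nats, two inequalities
link the divergences through `‖p - Q‖₁`:
* reverse Pinsker, `D(p‖Q) ≤ log (1/m) · ‖p - Q‖₁` for `m ≤ 1/2`, termwise
  `x log (x/y) ≤ 2 log (1/m) · (x - y)⁺`, from secant bounds for the convex functions
  `t log t` and `-log`;
* Pinsker, `‖p - Q‖₁² ≤ 2 D(Q‖p)`, from `klFun t ≥ 3 (t - 1)² / (2 (t + 2))` and
  Cauchy–Schwarz.
Since `log₂ (1/m) = N log₂ (1/μ_q)`, passing to bits gives the claim. If `m > 1/2` the space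
is a point and both sides vanish.
-/

open scoped ENNReal BigOperators

attribute [local instance] Classical.propDecidable

/-- Kullback–Leibler divergence (base 2) between two pmfs on a finite set,
valued in `[0, +∞]`. -/
noncomputable def klDiv {α : Type*} [Fintype α] (p q : α → ℝ) : ℝ≥0∞ :=
  if ∀ x, q x = 0 → p x = 0 then
    ENNReal.ofReal (∑ x, p x * Real.logb 2 (p x / q x))
  else ⊤

/-- A probability mass function on a finite set. -/
def IsPMF {α : Type*} [Fintype α] (p : α → ℝ) : Prop :=
  (∀ x, 0 ≤ p x) ∧ ∑ x, p x = 1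

open Real Set Finset
open InformationTheory (klFun klFun_one klFun_apply hasDerivAt_klFun continuous_klFun)

lemma two_mul_sub_one_div_add_one_le_log {x : ℝ} (hx : 1 ≤ x) :
    2 * (x - 1) / (x + 1) ≤ log x := by
  convert le_log_one_add_of_nonneg (sub_nonneg.2 hx) using 2 <;> ring

lemma log_le_two_mul_sub_one_div_add_one {x : ℝ} (hx₀ : 0 < x) (hx₁ : x ≤ 1) :
    log x ≤ 2 * (x - 1) / (x + 1) := by
  have h := two_mul_sub_one_div_add_one_le_log ((one_le_inv₀ hx₀).2 hx₁)
  have h_inv : 2 * (x⁻¹ - 1) / (x⁻¹ + 1) = -(2 * (x - 1) / (x + 1)) := by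
    field_simp
    ring
  rw [log_inv, h_inv] at h
  linarith

lemma hasDerivAt_klFun_sub_three_mul_sq_div {x : ℝ} (hx : 0 < x) :
    HasDerivAt (fun x => klFun x - 3 * (x - 1) ^ 2 / (2 * (x + 2)))
      (log x - 3 * (x - 1) * (x + 5) / (2 * (x + 2) ^ 2)) x := by
  have h_num : HasDerivAt (fun y : ℝ => 3 * (y - 1) ^ 2) (6 * (x - 1)) x :=
    ((((hasDerivAt_id' x).sub_const 1).pow 2).const_mul 3).congr_deriv (by ring)
  have h_den : HasDerivAt (fun y : ℝ => 2 * (y + 2)) 2 x :=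
    (((hasDerivAt_id' x).add_const 2).const_mul 2).congr_deriv (by ring)
  have h_rat := h_num.div h_den (by positivity)
  refine ((hasDerivAt_klFun hx.ne').sub h_rat).congr_deriv ?_
  field_simp
  ring

lemma three_mul_sq_div_le_klFun {x : ℝ} (hx : 0 ≤ x) :
    3 * (x - 1) ^ 2 / (2 * (x + 2)) ≤ klFun x := by
  set φ : ℝ → ℝ := fun x => klFun x - 3 * (x - 1) ^ 2 / (2 * (x + 2))
  set φ' : ℝ → ℝ := fun y => log y - 3 * (y - 1) * (y + 5) / (2 * (y + 2) ^ 2)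
  have hφ_cont : ContinuousOn φ (Ici 0) := by
    refine continuous_klFun.continuousOn.sub (ContinuousOn.div (by fun_prop) (by fun_prop) ?_)
    intro y (hy : 0 ≤ y)
    positivity
  have hφ_deriv : ∀ y, 0 < y → HasDerivAt φ (φ' y) y :=
    fun y hy => hasDerivAt_klFun_sub_three_mul_sq_div hy
  suffices φ 1 ≤ φ x by simpa [φ, klFun_one] using this
  rcases le_total x 1 with hx₁ | hx₁
  · refine antitoneOn_of_hasDerivWithinAt_nonpos (f' := φ') (convex_Icc 0 1)
      (hφ_cont.mono Icc_subset_Ici_self) ?_ ?_ ⟨hx, hx₁⟩ ⟨zero_le_one, le_rfl⟩ hx₁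
    all_goals intro y hy; rw [interior_Icc] at hy; obtain ⟨hy₀, hy₁⟩ := hy
    · exact (hφ_deriv y hy₀).hasDerivWithinAt
    · have h_log := log_le_two_mul_sub_one_div_add_one hy₀ hy₁.le
      have : 2 * (y - 1) / (y + 1) ≤ 3 * (y - 1) * (y + 5) / (2 * (y + 2) ^ 2) := by
        rw [div_le_div_iff₀ (by linarith) (by positivity)]
        nlinarith [sq_nonneg (y - 1)]
      linarith
  · refine monotoneOn_of_hasDerivWithinAt_nonneg (f' := φ') (convex_Ici 1)
      (hφ_cont.mono (Ici_subset_Ici.2 zero_le_one)) ?_ ?_ self_mem_Ici hx₁ hx₁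
    all_goals intro y hy; rw [interior_Ici] at hy; have hy₁ : 1 < y := hy
    · exact (hφ_deriv y (by linarith)).hasDerivWithinAt
    · have h_log := two_mul_sub_one_div_add_one_le_log hy₁.le
      have : 3 * (y - 1) * (y + 5) / (2 * (y + 2) ^ 2) ≤ 2 * (y - 1) / (y + 1) := by
        rw [div_le_div_iff₀ (by positivity) (by linarith)]
        nlinarith [sq_nonneg (y - 1)]
      linarith

theorem sq_sum_abs_sub_le_two_mul_sum_mul_log {α : Type*} [Fintype α] {P Q : α → ℝ}
    (hP : ∀ z, 0 < P z) (hP_sum : ∑ z, P z = 1) (hQ : ∀ z, 0 ≤ Q z)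
    (hQ_sum : ∑ z, Q z = 1) :
    (∑ z, |P z - Q z|) ^ 2 ≤ 2 * ∑ z, Q z * log (Q z / P z) := by
  set w : α → ℝ := fun z => 2 / 3 * (Q z + 2 * P z)
  have hw : ∀ z, 0 < w z := fun z => by have := hP z; have := hQ z; positivity
  have hw_sum : ∑ z, w z = 2 := by
    simp only [w, ← mul_sum, sum_add_distrib, hP_sum, hQ_sum]
    norm_num
  have h_term : ∀ z, |P z - Q z| ^ 2 / w z ≤ Q z * log (Q z / P z) - Q z + P z := by
    intro z
    have hPz := hP z
    calc |P z - Q z| ^ 2 / w z = P z * (3 * (Q z / P z - 1) ^ 2 / (2 * (Q z / P z + 2))) := by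
          have := hw z
          simp only [w, sq_abs] at this ⊢
          field_simp
          ring
      _ ≤ P z * klFun (Q z / P z) := by
          gcongr
          exact three_mul_sq_div_le_klFun (div_nonneg (hQ z) hPz.le)
      _ = Q z * log (Q z / P z) - Q z + P z := by
          rw [klFun_apply]
          field_simp
          ring
  calc (∑ z, |P z - Q z|) ^ 2 ≤ (∑ z, w z) * ∑ z, |P z - Q z| ^ 2 / w z := by
        rw [← div_le_iff₀' (by rw [hw_sum]; norm_num)]
        exact sq_sum_div_le_sum_sq_div _ _ fun z _ => hw z
    _ ≤ 2 * ∑ z, (Q z * log (Q z / P z) - Q z + P z) := by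
        rw [hw_sum]
        gcongr with z
        exact h_term z
    _ = 2 * ∑ z, Q z * log (Q z / P z) := by
        rw [sum_add_distrib, sum_sub_distrib, hP_sum, hQ_sum]
        ring

lemma neg_log_div_one_sub_le {m x : ℝ} (hm : 0 < m) (hmx : m ≤ x) (hx : x < 1) :
    -log x / (1 - x) ≤ -log m / (1 - m) := by
  have h := strictConcaveOn_log_Ioi.concaveOn.neg.secant_mono (a := 1) (x := m) (y := x)
    (mem_Ioi.2 one_pos) hm (hm.trans_le hmx) (by linarith) hx.ne hmx
  simp only [Pi.neg_apply, log_one, neg_zero, sub_zero] at h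
  rw [← neg_div_neg_eq, neg_sub, ← neg_div_neg_eq (-log x), neg_sub, neg_neg, neg_neg] at h
  rw [neg_div, neg_div]
  exact neg_le_neg h

lemma mul_log_div_le_of_lt {x y : ℝ} (hy : 0 < y) (hyx : y < x) (hx : x ≤ 1) :
    x * log (x / y) ≤ (x - y) * (-log y / (1 - y)) := by
  have h := Real.convexOn_mul_log.secant_mono (a := y) (x := x) (y := 1)
    hy.le (hy.trans hyx).le (mem_Ici.2 zero_le_one) hyx.ne' (by linarith) hx
  rw [one_mul, log_one, div_le_div_iff₀ (by linarith) (by linarith)] at h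
  rw [log_div (by linarith) hy.ne']
  have : 0 < 1 - y := by linarith
  rw [mul_div_assoc', le_div_iff₀ this]
  nlinarith

lemma mul_log_div_le_neg_log_mul {m x y : ℝ} (hm : 0 < m) (hm_half : m ≤ 1 / 2) (hmy : m ≤ y)
    (hx₀ : 0 ≤ x) (hx₁ : x ≤ 1) :
    x * log (x / y) ≤ -log m * (|x - y| + (x - y)) := by
  have hy : 0 < y := hm.trans_le hmy
  rcases le_or_gt x y with hxy | hyx
  · rw [abs_of_nonpos (by linarith), neg_add_cancel, mul_zero]
    exact mul_nonpos_of_nonneg_of_nonpos hx₀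
      (log_nonpos (div_nonneg hx₀ hy.le) ((div_le_one hy).2 hxy))
  · have hy₁ : y < 1 := hyx.trans_le hx₁
    have h_log_m : 0 ≤ -log m := neg_nonneg.2 (log_nonpos hm.le (by linarith))
    calc x * log (x / y) ≤ (x - y) * (-log y / (1 - y)) := mul_log_div_le_of_lt hy hyx hx₁
      _ ≤ (x - y) * (-log m / (1 - m)) :=
          mul_le_mul_of_nonneg_left (neg_log_div_one_sub_le hm hmy hy₁) (by linarith)
      _ ≤ (x - y) * (2 * -log m) := by
          gcongr
          rw [div_le_iff₀ (by linarith)]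
          nlinarith
      _ = -log m * (|x - y| + (x - y)) := by
          rw [abs_of_pos (by linarith)]
          ring

theorem sum_mul_log_div_le_neg_log_mul_sum_abs_sub {α : Type*} [Fintype α] {P Q : α → ℝ}
    (hP : IsPMF P) (hQ_sum : ∑ z, Q z = 1) {m : ℝ} (hm : 0 < m) (hm_half : m ≤ 1 / 2)
    (hmQ : ∀ z, m ≤ Q z) :
    ∑ z, P z * log (P z / Q z) ≤ -log m * ∑ z, |P z - Q z| := by
  have hP₁ : ∀ z, P z ≤ 1 := fun z => hP.2 ▸ single_le_sum (fun i _ => hP.1 i) (mem_univ z)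
  calc ∑ z, P z * log (P z / Q z) ≤ ∑ z, -log m * (|P z - Q z| + (P z - Q z)) :=
        sum_le_sum fun z _ => mul_log_div_le_neg_log_mul hm hm_half (hmQ z) (hP.1 z) (hP₁ z)
    _ = -log m * ∑ z, |P z - Q z| := by
        rw [← mul_sum, sum_add_distrib, sum_sub_distrib, hP.2, hQ_sum, sub_self, add_zero]

section

variable {α : Type*} [Fintype α] {p q : α → ℝ}

lemma klDiv_self : klDiv p p = 0 := by
  rw [klDiv, if_pos fun _ h => h, sum_eq_zero, ENNReal.ofReal_zero]
  intro x _
  rcases eq_or_ne (p x) 0 with h | h <;> simp [h]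

lemma klDiv_eq_top {x : α} (hqx : q x = 0) (hpx : p x ≠ 0) : klDiv p q = ⊤ :=
  if_neg fun h => hpx (h x hqx)

lemma klDiv_eq_ofReal_div_log_two (hq : ∀ x, 0 < q x) :
    klDiv p q = ENNReal.ofReal ((∑ x, p x * log (p x / q x)) / log 2) := by
  rw [klDiv, if_pos fun x hx => absurd hx (hq x).ne', sum_div]
  simp only [logb, mul_div_assoc]

lemma IsPMF.eq_of_subsingleton [Subsingleton α] (hp : IsPMF p) (hq : IsPMF q) : p = q := by
  funext x
  have hp_sum := hp.2
  have hq_sum := hq.2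
  rw [Fintype.sum_subsingleton _ x] at hp_sum hq_sum
  rw [hp_sum, hq_sum]

lemma subsingleton_of_sum_eq_one_of_forall_half_lt (hq_sum : ∑ x, q x = 1)
    (hq : ∀ x, 1 / 2 < q x) : Subsingleton α := by
  refine ⟨fun a b => by_contra fun hab => ?_⟩
  have : q a + q b ≤ 1 := by
    rw [← hq_sum, ← sum_pair hab]
    exact sum_le_sum_of_subset_of_nonneg (subset_univ _) fun x _ _ => by linarith [hq x]
  linarith [hq a, hq b]

lemma IsPMF.pi {ι : Type*} [Fintype ι] [DecidableEq ι] (hq : IsPMF q) :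
    IsPMF (fun y : ι → α => ∏ i, q (y i)) :=
  ⟨fun y => prod_nonneg fun i _ => hq.1 (y i), by
    rw [← Fintype.prod_sum (fun _ => q), hq.2, prod_const_one]⟩

end

theorem klDiv_le_mul_rpow_klDiv_swap {α : Type*} [Fintype α] {P Q : α → ℝ}
    (hP : IsPMF P) (hQ : IsPMF Q) {m : ℝ} (hm : 0 < m) (hmQ : ∀ z, m ≤ Q z) :
    klDiv P Q ≤ ENNReal.ofReal (logb 2 m⁻¹ * √(2 * log 2)) * klDiv Q P ^ (1 / 2 : ℝ) := by
  rcases lt_or_ge (1 / 2) m with hm_half | hm_half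
  · have := subsingleton_of_sum_eq_one_of_forall_half_lt hQ.2 fun z => hm_half.trans_le (hmQ z)
    rw [hP.eq_of_subsingleton hQ, klDiv_self]
    exact bot_le
  have hQ_pos : ∀ z, 0 < Q z := fun z => hm.trans_le (hmQ z)
  by_cases hP_pos : ∀ z, 0 < P z
  swap
  · obtain ⟨z, hz⟩ := not_forall.1 hP_pos
    have h_const : 0 < logb 2 m⁻¹ * √(2 * log 2) :=
      mul_pos (logb_pos one_lt_two ((one_lt_inv₀ hm).2 (by linarith))) (by positivity)
    rw [klDiv_eq_top (not_lt.1 hz |>.antisymm (hP.1 z)) (hQ_pos z).ne',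
      ENNReal.top_rpow_of_pos (by norm_num), ENNReal.mul_top (by simpa using h_const)]
    exact le_top
  set K := ∑ z, Q z * log (Q z / P z)
  have h_pinsker := sq_sum_abs_sub_le_two_mul_sum_mul_log hP_pos hP.2 hQ.1 hQ.2
  have hK : 0 ≤ K := by nlinarith [sq_nonneg (∑ z, |P z - Q z|)]
  have h_nats : ∑ z, P z * log (P z / Q z) ≤ -log m * √(2 * K) :=
    (sum_mul_log_div_le_neg_log_mul_sum_abs_sub hP hQ.2 hm hm_half hmQ).trans
      (mul_le_mul_of_nonneg_left (le_sqrt_of_sq_le h_pinsker)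
        (neg_nonneg.2 (log_nonpos hm.le (by linarith))))
  have h_logb : 0 ≤ logb 2 m⁻¹ := logb_nonneg one_lt_two ((one_le_inv₀ hm).2 (by linarith))
  rw [klDiv_eq_ofReal_div_log_two hQ_pos, klDiv_eq_ofReal_div_log_two hP_pos,
    ENNReal.ofReal_rpow_of_nonneg (by positivity) (by norm_num), ← sqrt_eq_rpow,
    ← ENNReal.ofReal_mul (by positivity)]
  refine ENNReal.ofReal_le_ofReal ?_
  calc (∑ z, P z * log (P z / Q z)) / log 2 ≤ -log m * √(2 * K) / log 2 := by gcongr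
    _ = logb 2 m⁻¹ * √(2 * log 2) * √(K / log 2) := by
        rw [mul_assoc, ← sqrt_mul (by positivity), logb, log_inv]
        field_simp

theorem klDiv_prod_target_le_general {𝒴 : Type*} [Fintype 𝒴] [Nonempty 𝒴]
    (q : 𝒴 → ℝ) (hq : IsPMF q) (hqpos : ∀ y, 0 < q y)
    {N : ℕ} (p : (Fin N → 𝒴) → ℝ) (hp : IsPMF p) :
    klDiv p (fun y => ∏ i, q (y i)) ≤
      ENNReal.ofReal
          ((N : ℝ) * Real.logb 2 ((Finset.univ.inf' Finset.univ_nonempty q)⁻¹) *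
            Real.sqrt (2 * Real.log 2)) *
        (klDiv (fun y => ∏ i, q (y i)) p) ^ (1 / 2 : ℝ) := by
  have hμ : 0 < univ.inf' univ_nonempty q := (lt_inf'_iff _).2 fun y _ => hqpos y
  have hμ_le (y : Fin N → 𝒴) : (univ.inf' univ_nonempty q) ^ N ≤ ∏ i, q (y i) := by
    calc (univ.inf' univ_nonempty q) ^ N = ∏ _i : Fin N, univ.inf' univ_nonempty q := by
          rw [prod_const, card_univ, Fintype.card_fin]
      _ ≤ ∏ i, q (y i) := prod_le_prod (fun _ _ => hμ.le) fun i _ => inf'_le q (mem_univ (y i))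
  have h := klDiv_le_mul_rpow_klDiv_swap hp hq.pi (pow_pos hμ N) hμ_le
  rwa [← inv_pow, logb_pow] at h

/-- Appendix B claim: for any pmf `p` on `𝒴^N` and a positive pmf `q` on `𝒴`,
`D(p‖q^{⊗N}) ≤ N · log₂(1/μ_q) · √(2 ln 2) · √(D(q^{⊗N}‖p))`. -/
theorem klDiv_prod_target_le {𝒴 : Type*} [Fintype 𝒴] [Nonempty 𝒴]
    (q : 𝒴 → ℝ) (hq : IsPMF q) (hqpos : ∀ y, 0 < q y)
    {N : ℕ} (hN : 1 ≤ N) (p : (Fin N → 𝒴) → ℝ) (hp : IsPMF p) :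
    klDiv p (fun y => ∏ i, q (y i)) ≤
      ENNReal.ofReal
          ((N : ℝ) * Real.logb 2 ((Finset.univ.inf' Finset.univ_nonempty q)⁻¹) *
            Real.sqrt (2 * Real.log 2)) *
        (klDiv (fun y => ∏ i, q (y i)) p) ^ (1 / 2 : ℝ) :=
  klDiv_prod_target_le_general q hq hqpos p hp
end

section
/- Let 𝒱 and 𝒳 be finite nonempty sets, N ≥ 1, and let q be a joint pmf of (U^{1:N}, X) on 𝒱^N × 𝒳. Let δ > 0 and let F₁, S ⊆ {1, …, N} be disjoint sets such that H(U^j | U^{1:j−1}) ≤ δ for every j ∈ F₁ and H(U^j | U^{1:j−1} X) > log₂|𝒱| − δ for every j ∈ S (conditional entropies under q). Define the joint pmf p̃ on 𝒱^N × 𝒳 by p̃(u^{1:N}, x) = q_X(x) · ∏_{j∈F₁} q_{U^j|U^{1:j−1}}(u^j | u^{1:j−1}) · ∏_{j∈S} |𝒱|^{−1} · ∏_{j∉F₁∪S} q_{U^j|U^{1:j−1}X}(u^j | u^{1:j−1}, x). Then D(q ‖ p̃) ≤ |S| δ + |F₁| δ ≤ N δ. (Core computation of Lemma 12 (Lemma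 lemstrongcoord2) of the paper, which analyzes the conditional-resolvability-achieving polar encoder for strong coordination.) -/
open scoped ENNReal BigOperators

attribute [local instance] Classical.propDecidable

/-- Variational distance between two pmfs. -/
noncomputable def varDist {α : Type*} [Fintype α] (p q : α → ℝ) : ℝ :=
  ∑ x, |p x - q x|

/-- `𝒳`-marginal of a joint pmf `q` of `(U^{1:N}, X)`. -/
noncomputable def margX {𝒱 𝒳 : Type*} [Fintype 𝒱] [Fintype 𝒳] {N : ℕ}
    (q : (Fin N → 𝒱) × 𝒳 → ℝ) (x : 𝒳) : ℝ :=
  ∑ u, q (u, x)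

/-- Probability, under `q`, that the `U`-coordinates strictly before `j`
agree with `u` (marginally over `X`). -/
noncomputable def prefLTU {𝒱 𝒳 : Type*} [Fintype 𝒱] [Fintype 𝒳] [DecidableEq 𝒱] {N : ℕ}
    (q : (Fin N → 𝒱) × 𝒳 → ℝ) (j : Fin N) (u : Fin N → 𝒱) : ℝ :=
  ∑ z : (Fin N → 𝒱) × 𝒳, if ∀ l, l < j → z.1 l = u l then q z else 0

/-- Probability, under `q`, that the `U`-coordinates up to and including `j`
agree with `u` (marginally over `X`). -/
noncomputable def prefLEU {𝒱 𝒳 : Type*} [Fintype 𝒱] [Fintype 𝒳] [DecidableEq 𝒱] {N : ℕ}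
    (q : (Fin N → 𝒱) × 𝒳 → ℝ) (j : Fin N) (u : Fin N → 𝒱) : ℝ :=
  ∑ z : (Fin N → 𝒱) × 𝒳, if ∀ l, l ≤ j → z.1 l = u l then q z else 0

/-- Conditional probability `q_{U^j|U^{1:j−1}}(u^j|u^{1:j−1})`, with the uniform
distribution chosen for conditioning values of probability zero. -/
noncomputable def condProbU {𝒱 𝒳 : Type*} [Fintype 𝒱] [Fintype 𝒳] [DecidableEq 𝒱] {N : ℕ}
    (q : (Fin N → 𝒱) × 𝒳 → ℝ) (j : Fin N) (u : Fin N → 𝒱) : ℝ :=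
  if prefLTU q j u = 0 then (Fintype.card 𝒱 : ℝ)⁻¹ else prefLEU q j u / prefLTU q j u

/-- Probability, under `q`, that the `U`-coordinates strictly before `j` agree
with `u` and the `X`-coordinate equals `x`. -/
noncomputable def prefLTUX {𝒱 𝒳 : Type*} [Fintype 𝒱] [Fintype 𝒳] [DecidableEq 𝒱] [DecidableEq 𝒳] {N : ℕ}
    (q : (Fin N → 𝒱) × 𝒳 → ℝ) (j : Fin N) (u : Fin N → 𝒱) (x : 𝒳) : ℝ :=
  ∑ z : (Fin N → 𝒱) × 𝒳, if (∀ l, l < j → z.1 l = u l) ∧ z.2 = x then q z else 0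

/-- Probability, under `q`, that the `U`-coordinates up to and including `j`
agree with `u` and the `X`-coordinate equals `x`. -/
noncomputable def prefLEUX {𝒱 𝒳 : Type*} [Fintype 𝒱] [Fintype 𝒳] [DecidableEq 𝒱] [DecidableEq 𝒳] {N : ℕ}
    (q : (Fin N → 𝒱) × 𝒳 → ℝ) (j : Fin N) (u : Fin N → 𝒱) (x : 𝒳) : ℝ :=
  ∑ z : (Fin N → 𝒱) × 𝒳, if (∀ l, l ≤ j → z.1 l = u l) ∧ z.2 = x then q z else 0

/-- Conditional probability `q_{U^j|U^{1:j−1} X}(u^j|u^{1:j−1}, x)`, with the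
uniform distribution chosen for conditioning values of probability zero. -/
noncomputable def condProbUX {𝒱 𝒳 : Type*} [Fintype 𝒱] [Fintype 𝒳] [DecidableEq 𝒱] [DecidableEq 𝒳] {N : ℕ}
    (q : (Fin N → 𝒱) × 𝒳 → ℝ) (j : Fin N) (u : Fin N → 𝒱) (x : 𝒳) : ℝ :=
  if prefLTUX q j u x = 0 then (Fintype.card 𝒱 : ℝ)⁻¹
  else prefLEUX q j u x / prefLTUX q j u x

/-- Conditional Shannon entropy `H(U^j | U^{1:j−1})` under `q`. -/
noncomputable def condEntU {𝒱 𝒳 : Type*} [Fintype 𝒱] [Fintype 𝒳] [DecidableEq 𝒱] {N : ℕ}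
    (q : (Fin N → 𝒱) × 𝒳 → ℝ) (j : Fin N) : ℝ :=
  -∑ z : (Fin N → 𝒱) × 𝒳, q z * Real.logb 2 (condProbU q j z.1)

/-- Conditional Shannon entropy `H(U^j | U^{1:j−1} X)` under `q`. -/
noncomputable def condEntUX {𝒱 𝒳 : Type*} [Fintype 𝒱] [Fintype 𝒳] [DecidableEq 𝒱] [DecidableEq 𝒳] {N : ℕ}
    (q : (Fin N → 𝒱) × 𝒳 → ℝ) (j : Fin N) : ℝ :=
  -∑ z : (Fin N → 𝒱) × 𝒳, q z * Real.logb 2 (condProbUX q j z.1 z.2)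

/-- The polar-encoder joint pmf `p̃(u^{1:N}, x)` for conditional resolvability:
`X` keeps its marginal; positions in `F₁` are drawn from the conditionals given
the past `U`'s only, positions in `S` are uniform, and the remaining positions
are drawn from the conditionals given the past `U`'s and `X`. -/
noncomputable def ptilde {𝒱 𝒳 : Type*} [Fintype 𝒱] [Fintype 𝒳] [DecidableEq 𝒱] [DecidableEq 𝒳] {N : ℕ}
    (q : (Fin N → 𝒱) × 𝒳 → ℝ) (F₁ S : Finset (Fin N)) : (Fin N → 𝒱) × 𝒳 → ℝ :=
  fun z => margX q z.2 * ∏ j : Fin N,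
    (if j ∈ F₁ then condProbU q j z.1
     else if j ∈ S then (Fintype.card 𝒱 : ℝ)⁻¹
     else condProbUX q j z.1 z.2)

/-! On the support of `q`, the chain rule `q(u, x) = q_X(x) ∏ⱼ q(uʲ | u^{1:j−1}, x)` turns
`log₂ (q / p̃)` into a sum of per-position log-ratios over `j ∈ F₁ ∪ S` (the other positions
of `p̃` use exactly the factors of the chain rule). Averaging over `q`, a position `j ∈ F₁`
contributes `H(Uʲ | U^{1:j−1}) − H(Uʲ | U^{1:j−1} X) ≤ H(Uʲ | U^{1:j−1}) ≤ δ` and a position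
`j ∈ S` contributes `log₂ |𝒱| − H(Uʲ | U^{1:j−1} X) < δ`. -/

open Finset

theorem mul_prod_range_div_eq {G₀ : Type*} [CommGroupWithZero G₀] (f : ℕ → G₀) (n : ℕ)
    (hf : ∀ k < n, f k ≠ 0) : f 0 * ∏ i ∈ range n, f (i + 1) / f i = f n := by
  induction n with
  | zero => simp
  | succ n ih =>
    rw [prod_range_succ, ← mul_assoc, ih fun k hk => hf k (hk.trans n.lt_succ_self),
      mul_div_cancel₀ _ (hf n n.lt_succ_self)]

section ChainRule

variable {𝒱 𝒳 : Type*} [Fintype 𝒱] [Fintype 𝒳] [DecidableEq 𝒱] [DecidableEq 𝒳] {N : ℕ}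
  (q : (Fin N → 𝒱) × 𝒳 → ℝ)

/-- Unifies `prefLTUX` (prefix length `j`) and `prefLEUX` (length `j + 1`), with the length
ranging over `0, …, N`. -/
noncomputable def prefixProb (u : Fin N → 𝒱) (x : 𝒳) (k : ℕ) : ℝ :=
  ∑ z : (Fin N → 𝒱) × 𝒳, if (∀ l : Fin N, (l : ℕ) < k → z.1 l = u l) ∧ z.2 = x then q z else 0

theorem prefLTUX_eq_prefixProb (j : Fin N) (u : Fin N → 𝒱) (x : 𝒳) :
    prefLTUX q j u x = prefixProb q u x j := by
  simp only [prefLTUX, prefixProb, Fin.lt_def]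

theorem prefLEUX_eq_prefixProb (j : Fin N) (u : Fin N → 𝒱) (x : 𝒳) :
    prefLEUX q j u x = prefixProb q u x (j + 1) := by
  simp only [prefLEUX, prefixProb, Fin.le_def, Nat.lt_succ_iff]

theorem prefixProb_zero (u : Fin N → 𝒱) (x : 𝒳) : prefixProb q u x 0 = margX q x := by
  simp [prefixProb, margX, Fintype.sum_prod_type]

theorem prefixProb_self (u : Fin N → 𝒱) (x : 𝒳) : prefixProb q u x N = q (u, x) := by
  rw [prefixProb, sum_eq_single_of_mem (u, x) (mem_univ _), if_pos ⟨fun _ _ => rfl, rfl⟩]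
  rintro z - hz
  rw [if_neg]
  rintro ⟨hu, hx⟩
  exact hz (Prod.ext (funext fun l => hu l l.isLt) hx)

variable {q}

theorem prefixProb_antitone (hq0 : ∀ z, 0 ≤ q z) (u : Fin N → 𝒱) (x : 𝒳) :
    Antitone (prefixProb q u x) := fun k m hkm =>
  sum_le_sum fun z _ => by
    split_ifs with hm hk
    · exact le_rfl
    · exact absurd ⟨fun l hl => hm.1 l (hl.trans_le hkm), hm.2⟩ hk
    · exact hq0 z
    · exact le_rfl

theorem margX_mul_prod_condProbUX (hq0 : ∀ z, 0 ≤ q z) (u : Fin N → 𝒱) (x : 𝒳)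
    (hux : 0 < q (u, x)) : margX q x * ∏ j, condProbUX q j u x = q (u, x) := by
  have hpos : ∀ k ≤ N, 0 < prefixProb q u x k := fun k hk =>
    hux.trans_le (prefixProb_self q u x ▸ prefixProb_antitone hq0 u x hk)
  have hcond : ∀ j : Fin N,
      condProbUX q j u x = prefixProb q u x (j + 1) / prefixProb q u x j := fun j => by
    rw [condProbUX, prefLTUX_eq_prefixProb, prefLEUX_eq_prefixProb,
      if_neg (hpos j j.isLt.le).ne']
  rw [prod_congr rfl fun j _ => hcond j, ← prefixProb_zero,
    Fin.prod_univ_eq_prod_range (fun i => prefixProb q u x (i + 1) / prefixProb q u x i),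
    mul_prod_range_div_eq _ _ fun k hk => (hpos k hk.le).ne', prefixProb_self]

end ChainRule

section Positivity

variable {𝒱 𝒳 : Type*} [Fintype 𝒱] [Fintype 𝒳] [DecidableEq 𝒱] {N : ℕ}
  {q : (Fin N → 𝒱) × 𝒳 → ℝ}

theorem condProbU_pos (hq0 : ∀ z, 0 ≤ q z) (j : Fin N) (u : Fin N → 𝒱) (x : 𝒳)
    (hux : 0 < q (u, x)) : 0 < condProbU q j u := by
  have hle : q (u, x) ≤ prefLEU q j u := by
    simpa [prefLEU] using single_le_sum (f := fun z : (Fin N → 𝒱) × 𝒳 =>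
      if ∀ l, l ≤ j → z.1 l = u l then q z else 0)
      (fun z _ => ite_nonneg (hq0 z) le_rfl) (mem_univ (u, x))
  have hnonneg : 0 ≤ prefLTU q j u := sum_nonneg fun z _ => ite_nonneg (hq0 z) le_rfl
  rw [condProbU]
  split_ifs with h
  · have : Nonempty 𝒱 := ⟨u j⟩
    positivity
  · exact div_pos (hux.trans_le hle) (hnonneg.lt_of_ne' h)

variable [DecidableEq 𝒳]

theorem condProbUX_pos (hq0 : ∀ z, 0 ≤ q z) (j : Fin N) (u : Fin N → 𝒱) (x : 𝒳)
    (hux : 0 < q (u, x)) : 0 < condProbUX q j u x := by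
  have hle : q (u, x) ≤ prefLEUX q j u x := by
    simpa [prefLEUX] using single_le_sum (f := fun z : (Fin N → 𝒱) × 𝒳 =>
      if (∀ l, l ≤ j → z.1 l = u l) ∧ z.2 = x then q z else 0)
      (fun z _ => ite_nonneg (hq0 z) le_rfl) (mem_univ (u, x))
  have hnonneg : 0 ≤ prefLTUX q j u x := sum_nonneg fun z _ => ite_nonneg (hq0 z) le_rfl
  rw [condProbUX]
  split_ifs with h
  · have : Nonempty 𝒱 := ⟨u j⟩
    positivity
  · exact div_pos (hux.trans_le hle) (hnonneg.lt_of_ne' h)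

theorem condProbUX_le_one (hq0 : ∀ z, 0 ≤ q z) (j : Fin N) (u : Fin N → 𝒱) (x : 𝒳) :
    condProbUX q j u x ≤ 1 := by
  have : Nonempty 𝒱 := ⟨u j⟩
  rw [condProbUX]
  split_ifs with h
  · exact inv_le_one_of_one_le₀ (Nat.one_le_cast.mpr Fintype.card_pos)
  · refine div_le_one_of_le₀ (sum_le_sum fun z _ => ?_)
      (sum_nonneg fun z _ => ite_nonneg (hq0 z) le_rfl)
    split_ifs with hle hlt
    · exact le_rfl
    · exact absurd ⟨fun l hl => hle.1 l hl.le, hle.2⟩ hlt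
    · exact hq0 z
    · exact le_rfl

theorem condEntUX_nonneg (hq0 : ∀ z, 0 ≤ q z) (j : Fin N) : 0 ≤ condEntUX q j := by
  rw [condEntUX, neg_nonneg]
  refine sum_nonpos fun z _ => ?_
  rcases (hq0 z).eq_or_lt with hz | hz
  · rw [← hz, zero_mul]
  · exact mul_nonpos_of_nonneg_of_nonpos hz.le (Real.logb_nonpos one_lt_two
      (condProbUX_pos hq0 j z.1 z.2 hz).le (condProbUX_le_one hq0 j z.1 z.2))

theorem ptilde_pos (hq0 : ∀ z, 0 ≤ q z) (F₁ S : Finset (Fin N)) {z : (Fin N → 𝒱) × 𝒳}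
    (hz : 0 < q z) : 0 < ptilde q F₁ S z := by
  have hmarg : 0 < margX q z.2 :=
    hz.trans_le (single_le_sum (fun v _ => hq0 (v, z.2)) (mem_univ z.1))
  refine mul_pos hmarg (prod_pos fun j _ => ?_)
  split_ifs
  · exact condProbU_pos hq0 j z.1 z.2 hz
  · have : Nonempty 𝒱 := ⟨z.1 j⟩
    positivity
  · exact condProbUX_pos hq0 j z.1 z.2 hz

end Positivity

section Divergence

variable {𝒱 𝒳 : Type*} [Fintype 𝒱] [Fintype 𝒳] [DecidableEq 𝒱] [DecidableEq 𝒳] {N : ℕ}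
  {q : (Fin N → 𝒱) × 𝒳 → ℝ} {F₁ S : Finset (Fin N)}

theorem logb_div_ptilde (hq0 : ∀ z, 0 ≤ q z) (hdisj : Disjoint F₁ S) {z : (Fin N → 𝒱) × 𝒳}
    (hz : 0 < q z) :
    Real.logb 2 (q z / ptilde q F₁ S z) =
      ∑ j ∈ F₁, (Real.logb 2 (condProbUX q j z.1 z.2) - Real.logb 2 (condProbU q j z.1)) +
        ∑ j ∈ S, (Real.logb 2 (Fintype.card 𝒱) + Real.logb 2 (condProbUX q j z.1 z.2)) := by
  set f : Fin N → ℝ := fun j =>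
    if j ∈ F₁ then condProbU q j z.1
    else if j ∈ S then (Fintype.card 𝒱 : ℝ)⁻¹
    else condProbUX q j z.1 z.2 with hf
  have hUX : ∀ j, 0 < condProbUX q j z.1 z.2 := fun j => condProbUX_pos hq0 j z.1 z.2 hz
  have hf0 : ∀ j, f j ≠ 0 := fun j =>
    prod_ne_zero_iff.mp (right_ne_zero_of_mul (ptilde_pos hq0 F₁ S hz).ne') j (mem_univ j)
  have hratio : q z / ptilde q F₁ S z = ∏ j, condProbUX q j z.1 z.2 / f j := by
    have hmarg : margX q z.2 ≠ 0 := left_ne_zero_of_mul (ptilde_pos hq0 F₁ S hz).ne'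
    rw [← margX_mul_prod_condProbUX hq0 z.1 z.2 hz, ptilde, mul_div_mul_left _ _ hmarg,
      prod_div_distrib]
  have hterm : ∀ j, Real.logb 2 (condProbUX q j z.1 z.2 / f j) =
      (if j ∈ F₁ then Real.logb 2 (condProbUX q j z.1 z.2) - Real.logb 2 (condProbU q j z.1)
        else 0) +
      (if j ∈ S then Real.logb 2 (Fintype.card 𝒱) + Real.logb 2 (condProbUX q j z.1 z.2)
        else 0) := fun j => by
    by_cases hF : j ∈ F₁
    · have hS : j ∉ S := disjoint_left.mp hdisj hF
      have hU : condProbU q j z.1 ≠ 0 := by simpa [hf, hF] using hf0 j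
      simp only [hf, hF, hS, if_true, if_false, add_zero, Real.logb_div (hUX j).ne' hU]
    · by_cases hS : j ∈ S
      · have hcard : (Fintype.card 𝒱 : ℝ) ≠ 0 := by simpa [hf, hF, hS] using hf0 j
        simp only [hf, hF, hS, if_true, if_false, zero_add, div_inv_eq_mul,
          Real.logb_mul (hUX j).ne' hcard, add_comm]
      · simp [hf, hF, hS, div_self (hUX j).ne']
  rw [hratio, Real.logb_prod _ _ fun j _ => div_ne_zero (hUX j).ne' (hf0 j)]
  simp only [hterm, sum_add_distrib, sum_ite_mem, univ_inter]

theorem sum_mul_logb_div_ptilde (hq : IsPMF q) (hdisj : Disjoint F₁ S) :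
    ∑ z, q z * Real.logb 2 (q z / ptilde q F₁ S z) =
      ∑ j ∈ F₁, (condEntU q j - condEntUX q j) +
        ∑ j ∈ S, (Real.logb 2 (Fintype.card 𝒱) - condEntUX q j) := by
  obtain ⟨hq0, hq1⟩ := hq
  have hpoint : ∀ z, q z * Real.logb 2 (q z / ptilde q F₁ S z) =
      ∑ j ∈ F₁, q z * (Real.logb 2 (condProbUX q j z.1 z.2) - Real.logb 2 (condProbU q j z.1)) +
        ∑ j ∈ S, q z * (Real.logb 2 (Fintype.card 𝒱) + Real.logb 2 (condProbUX q j z.1 z.2)) :=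
    fun z => by
      rcases (hq0 z).eq_or_lt with hz | hz
      · simp [← hz]
      · rw [logb_div_ptilde hq0 hdisj hz, mul_add, mul_sum, mul_sum]
  rw [sum_congr rfl fun z _ => hpoint z, sum_add_distrib, sum_comm, sum_comm (t := S)]
  congr 1 <;> refine sum_congr rfl fun j _ => ?_
  · simp only [condEntU, condEntUX, mul_sub, sum_sub_distrib]
    ring
  · simp only [condEntUX, mul_add, sum_add_distrib, ← sum_mul, hq1]
    ring

end Divergence

theorem klDiv_cond_resolvability_encoder_general
    {𝒱 𝒳 : Type*} [Fintype 𝒱] [Fintype 𝒳] [DecidableEq 𝒱] [DecidableEq 𝒳]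
    {N : ℕ}
    (q : (Fin N → 𝒱) × 𝒳 → ℝ) (hq : IsPMF q) (δ : ℝ) (hδ : 0 < δ)
    (F₁ S : Finset (Fin N)) (hdisj : Disjoint F₁ S)
    (hF₁ : ∀ j ∈ F₁, condEntU q j ≤ δ)
    (hS : ∀ j ∈ S, Real.logb 2 (Fintype.card 𝒱) - δ < condEntUX q j) :
    klDiv q (ptilde q F₁ S) ≤
        ENNReal.ofReal ((S.card : ℝ) * δ + (F₁.card : ℝ) * δ) ∧
      (S.card : ℝ) * δ + (F₁.card : ℝ) * δ ≤ (N : ℝ) * δ := by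
  have habs : ∀ z, ptilde q F₁ S z = 0 → q z = 0 := fun z hz =>
    ((hq.1 z).eq_or_lt.resolve_right fun hpos => (ptilde_pos hq.1 F₁ S hpos).ne' hz).symm
  have hcard : S.card + F₁.card ≤ N := by
    simpa [card_union_of_disjoint hdisj.symm] using card_le_univ (S ∪ F₁)
  refine ⟨?_, ?_⟩
  · rw [klDiv, if_pos habs, sum_mul_logb_div_ptilde hq hdisj, add_comm]
    refine ENNReal.ofReal_le_ofReal (add_le_add ?_ ?_) <;>
      refine (sum_le_sum fun j hj => ?_).trans_eq (by rw [sum_const, nsmul_eq_mul])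
    · linarith [hS j hj]
    · linarith [hF₁ j hj, condEntUX_nonneg hq.1 j]
  · rw [← add_mul]
    exact mul_le_mul_of_nonneg_right (by exact_mod_cast hcard) hδ.le

/-- Core computation of Lemma 12 (lemstrongcoord2): for the conditional-
resolvability polar encoder, `D(q‖p̃) ≤ |S| δ + |F₁| δ ≤ N δ`. -/
theorem klDiv_cond_resolvability_encoder
    {𝒱 𝒳 : Type*} [Fintype 𝒱] [Fintype 𝒳] [DecidableEq 𝒱] [DecidableEq 𝒳]
    [Nonempty 𝒱] [Nonempty 𝒳] {N : ℕ} (hN : 1 ≤ N)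
    (q : (Fin N → 𝒱) × 𝒳 → ℝ) (hq : IsPMF q) (δ : ℝ) (hδ : 0 < δ)
    (F₁ S : Finset (Fin N)) (hdisj : Disjoint F₁ S)
    (hF₁ : ∀ j ∈ F₁, condEntU q j ≤ δ)
    (hS : ∀ j ∈ S, Real.logb 2 (Fintype.card 𝒱) - δ < condEntUX q j) :
    klDiv q (ptilde q F₁ S) ≤
        ENNReal.ofReal ((S.card : ℝ) * δ + (F₁.card : ℝ) * δ) ∧
      (S.card : ℝ) * δ + (F₁.card : ℝ) * δ ≤ (N : ℝ) * δ :=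
  klDiv_cond_resolvability_encoder_general q hq δ hδ F₁ S hdisj hF₁ hS
end

section
/- Let 𝒳 and 𝒴 be finite nonempty sets, let q be a pmf on 𝒳 × 𝒴, let k, N ≥ 1, and let p̃ be any pmf on ((𝒳 × 𝒴)^N)^k with block marginals p̃₁, …, p̃_k on (𝒳 × 𝒴)^N. Let T_{all} denote the joint histogram of all kN pairs. Then for every ε > 0, P_{p̃}[ V( q, T_{all} ) > ε ] ≤ ∑_{i=1}^{k} [ V( p̃_i, q^{⊗N} ) + 2 |𝒳| |𝒴| exp( − N ε² / (2 |𝒳|² |𝒴|²) ) ]. Note that the k blocks need not be independent under p̃. (Abstract form of Lemma 8 of the paper, combining the histogram convexity bound with a union bound.) -/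
/-! If the pooled histogram of all `kN` samples is `ε`-far from `q`, then, since it is the average
of the block histograms and `V(q, ·)` is convex, some block histogram is `ε`-far; a union bound
over the blocks reduces everything to single blocks. Replacing the law `p̃ᵢ` of block `i` by
`q^{⊗N}` costs at most `V(p̃ᵢ, q^{⊗N})` on any event. Under `q^{⊗N}`, a histogram at distance more
than `ε` has some letter whose frequency is off by more than `ε / |𝒳||𝒴|`, and the Chernoff bound
with Hoeffding's lemma `cosh t ≤ exp (t² / 2)` bounds the probability of this by
`2 exp (-Nε² / (2|𝒳|²|𝒴|²))` for each letter. -/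

open scoped ENNReal BigOperators

attribute [local instance] Classical.propDecidable

/-- Joint histogram (empirical distribution) of `N` samples. -/
noncomputable def empDist {α : Type*} [Fintype α] [DecidableEq α] {N : ℕ}
    (ω : Fin N → α) : α → ℝ :=
  fun a => (N : ℝ)⁻¹ * ∑ j, (if ω j = a then (1 : ℝ) else 0)

/-- Joint histogram (empirical distribution) of `kN` samples arranged in `k`
blocks of `N`. -/
noncomputable def empDistBlocks {α : Type*} [Fintype α] [DecidableEq α] {k N : ℕ}
    (ω : Fin k → Fin N → α) : α → ℝ :=
  fun a => ((k * N : ℕ) : ℝ)⁻¹ * ∑ j : Fin k, ∑ i : Fin N, (if ω j i = a then (1 : ℝ) else 0)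

/-- Pushforward (marginal) of a pmf along a map. -/
noncomputable def pushforward {Ω β : Type*} [Fintype Ω] [DecidableEq β]
    (p : Ω → ℝ) (f : Ω → β) : β → ℝ :=
  fun b => ∑ ω, if f ω = b then p ω else 0

section Prob

variable {Ω : Type*} [Fintype Ω]

noncomputable def prob (p : Ω → ℝ) (E : Ω → Prop) [DecidablePred E] : ℝ :=
  ∑ ω, if E ω then p ω else 0

theorem prob_mono {p : Ω → ℝ} (hp : ∀ ω, 0 ≤ p ω) {E F : Ω → Prop} [DecidablePred E]
    [DecidablePred F] (h : ∀ ω, E ω → F ω) : prob p E ≤ prob p F :=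
  Finset.sum_le_sum fun ω _ => by
    by_cases hE : E ω
    · simp [hE, h ω hE]
    · simp only [hE, if_false]; split_ifs <;> simp [hp ω]

theorem prob_or_le {p : Ω → ℝ} (hp : ∀ ω, 0 ≤ p ω) (E F : Ω → Prop) [DecidablePred E]
    [DecidablePred F] : prob p (fun ω => E ω ∨ F ω) ≤ prob p E + prob p F := by
  rw [prob, prob, prob, ← Finset.sum_add_distrib]
  refine Finset.sum_le_sum fun ω _ => ?_
  by_cases hE : E ω <;> by_cases hF : F ω <;> simp [hE, hF, hp ω]

theorem prob_exists_le_sum {ι : Type*} [Fintype ι] {p : Ω → ℝ} (hp : ∀ ω, 0 ≤ p ω)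
    (E : ι → Ω → Prop) [∀ i, DecidablePred (E i)] [DecidablePred fun ω => ∃ i, E i ω] :
    prob p (fun ω => ∃ i, E i ω) ≤ ∑ i, prob p (E i) := by
  simp only [prob]
  rw [Finset.sum_comm]
  refine Finset.sum_le_sum fun ω _ => ?_
  have hnonneg : ∀ i ∈ Finset.univ, 0 ≤ if E i ω then p ω else 0 := fun i _ => by
    split_ifs <;> simp [hp ω]
  split_ifs with h
  · obtain ⟨i, hi⟩ := h
    simpa [hi] using Finset.single_le_sum hnonneg (Finset.mem_univ i)
  · exact Finset.sum_nonneg hnonneg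

theorem prob_comp {β : Type*} [Fintype β] [DecidableEq β] (p : Ω → ℝ) (f : Ω → β)
    (E : β → Prop) [DecidablePred E] :
    prob p (fun ω => E (f ω)) = prob (pushforward p f) E := by
  rw [prob, ← Finset.sum_fiberwise Finset.univ f]
  refine Finset.sum_congr rfl fun b _ => ?_
  simp only [pushforward, Finset.sum_filter]
  by_cases hb : E b
  · simp only [hb, if_true]
    exact Finset.sum_congr rfl fun ω _ => by split_ifs <;> simp_all
  · simp only [hb, if_false]
    exact Finset.sum_eq_zero fun ω _ => by split_ifs <;> simp_all

theorem prob_le_varDist_add (p r : Ω → ℝ) (E : Ω → Prop) [DecidablePred E] :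
    prob p E ≤ varDist p r + prob r E := by
  rw [varDist, prob, prob, ← Finset.sum_add_distrib]
  refine Finset.sum_le_sum fun ω _ => ?_
  split_ifs
  · linarith [le_abs_self (p ω - r ω)]
  · simp

theorem prob_ge_le_exp_mul_mgf {p : Ω → ℝ} (hp : ∀ ω, 0 ≤ p ω)
    (S : Ω → ℝ) (a : ℝ) {t : ℝ} (ht : 0 ≤ t) :
    prob p (fun ω => a ≤ S ω) ≤ Real.exp (-(t * a)) * ∑ ω, p ω * Real.exp (t * S ω) := by
  rw [prob, Finset.mul_sum]
  refine Finset.sum_le_sum fun ω _ => ?_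
  split_ifs with h
  · have : 1 ≤ Real.exp (-(t * a)) * Real.exp (t * S ω) := by
      rw [← Real.exp_add]
      exact Real.one_le_exp (by nlinarith)
    nlinarith [hp ω]
  · exact mul_nonneg (Real.exp_nonneg _) (mul_nonneg (hp ω) (Real.exp_nonneg _))

end Prob

theorem exists_lt_abs_sub_of_lt_varDist {α : Type*} [Fintype α] [Nonempty α] {p r : α → ℝ}
    {ε : ℝ} (h : ε < varDist p r) : ∃ a, ε / Fintype.card α < |p a - r a| := by
  have hsum : ∑ _a : α, ε / Fintype.card α = ε := by
    rw [Finset.sum_const, Finset.card_univ, nsmul_eq_mul, mul_div_cancel₀ _ (by positivity)]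
  obtain ⟨a, -, ha⟩ := Finset.exists_lt_of_sum_lt (hsum.trans_lt h)
  exact ⟨a, ha⟩

section Concentration

variable {α : Type*} [Fintype α]

theorem IsPMF.nonempty {q : α → ℝ} (hq : IsPMF q) : Nonempty α := by
  by_contra h
  rw [not_nonempty_iff] at h
  simpa using hq.2

theorem IsPMF.le_one {q : α → ℝ} (hq : IsPMF q) (a : α) : q a ≤ 1 :=
  hq.2 ▸ Finset.single_le_sum (fun x _ => hq.1 x) (Finset.mem_univ a)

/-- Hoeffding's lemma on `[-1, 1]`. -/
theorem IsPMF.sum_mul_exp_le {q : α → ℝ} (hq : IsPMF q) {Y : α → ℝ} (hY : ∀ x, |Y x| ≤ 1)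
    (hmean : ∑ x, q x * Y x = 0) (t : ℝ) :
    ∑ x, q x * Real.exp (t * Y x) ≤ Real.exp (t ^ 2 / 2) := by
  -- convexity of `exp` on the chord from `-t` to `t`
  have hchord : ∀ x, Real.exp (t * Y x) ≤ Real.cosh t + Y x * Real.sinh t := fun x => by
    obtain ⟨hlo, hhi⟩ := abs_le.1 (hY x)
    have h := convexOn_exp.2 (Set.mem_univ t) (Set.mem_univ (-t))
      (by linarith : (0 : ℝ) ≤ (1 + Y x) / 2) (by linarith : (0 : ℝ) ≤ (1 - Y x) / 2) (by ring)
    simp only [smul_eq_mul] at h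
    calc Real.exp (t * Y x) = Real.exp ((1 + Y x) / 2 * t + (1 - Y x) / 2 * -t) := by ring_nf
      _ ≤ (1 + Y x) / 2 * Real.exp t + (1 - Y x) / 2 * Real.exp (-t) := h
      _ = Real.cosh t + Y x * Real.sinh t := by rw [Real.cosh_eq, Real.sinh_eq]; ring
  calc ∑ x, q x * Real.exp (t * Y x)
      ≤ ∑ x, q x * (Real.cosh t + Y x * Real.sinh t) :=
        Finset.sum_le_sum fun x _ => mul_le_mul_of_nonneg_left (hchord x) (hq.1 x)
    _ = (∑ x, q x) * Real.cosh t + (∑ x, q x * Y x) * Real.sinh t := by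
        simp only [Finset.sum_mul, ← Finset.sum_add_distrib]
        exact Finset.sum_congr rfl fun x _ => by ring
    _ = Real.cosh t := by rw [hq.2, hmean]; ring
    _ ≤ Real.exp (t ^ 2 / 2) := Real.cosh_le_exp_half_sq t

theorem IsPMF.prod_nonneg {q : α → ℝ} (hq : IsPMF q) {N : ℕ} (w : Fin N → α) :
    0 ≤ ∏ j, q (w j) :=
  Finset.prod_nonneg fun j _ => hq.1 (w j)

theorem sum_prod_mul_exp_sum_eq_pow (q Y : α → ℝ) (N : ℕ) (t : ℝ) :
    ∑ w : Fin N → α, (∏ j, q (w j)) * Real.exp (t * ∑ j, Y (w j)) =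
      (∑ x, q x * Real.exp (t * Y x)) ^ N := by
  rw [Fintype.sum_pow]
  refine Finset.sum_congr rfl fun w _ => ?_
  rw [Finset.mul_sum, Real.exp_sum, Finset.prod_mul_distrib]

theorem IsPMF.prob_pi_ge_le {q : α → ℝ} (hq : IsPMF q) {Y : α → ℝ} (hY : ∀ x, |Y x| ≤ 1)
    (hmean : ∑ x, q x * Y x = 0) (N : ℕ) {δ : ℝ} (hδ : 0 ≤ δ) :
    prob (fun w : Fin N → α => ∏ j, q (w j)) (fun w => N * δ ≤ ∑ j, Y (w j)) ≤
      Real.exp (-(N * δ ^ 2) / 2) :=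
  calc _ ≤ Real.exp (-(δ * (N * δ))) *
          ∑ w : Fin N → α, (∏ j, q (w j)) * Real.exp (δ * ∑ j, Y (w j)) :=
        prob_ge_le_exp_mul_mgf hq.prod_nonneg _ _ hδ
    _ = Real.exp (-(δ * (N * δ))) * (∑ x, q x * Real.exp (δ * Y x)) ^ N := by
        rw [sum_prod_mul_exp_sum_eq_pow]
    _ ≤ Real.exp (-(δ * (N * δ))) * Real.exp (δ ^ 2 / 2) ^ N := by
        gcongr
        · exact Finset.sum_nonneg fun x _ => mul_nonneg (hq.1 x) (Real.exp_nonneg _)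
        · exact hq.sum_mul_exp_le hY hmean δ
    _ = Real.exp (-(N * δ ^ 2) / 2) := by
        rw [← Real.exp_nat_mul, ← Real.exp_add]
        ring_nf

theorem IsPMF.prob_pi_le_abs_sum_le {q : α → ℝ} (hq : IsPMF q) {Y : α → ℝ}
    (hY : ∀ x, |Y x| ≤ 1) (hmean : ∑ x, q x * Y x = 0) (N : ℕ) {δ : ℝ} (hδ : 0 ≤ δ) :
    prob (fun w : Fin N → α => ∏ j, q (w j)) (fun w => N * δ ≤ |∑ j, Y (w j)|) ≤
      2 * Real.exp (-(N * δ ^ 2) / 2) :=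
  calc _ ≤ prob (fun w : Fin N → α => ∏ j, q (w j))
          (fun w => N * δ ≤ ∑ j, Y (w j) ∨ N * δ ≤ ∑ j, -Y (w j)) :=
        prob_mono hq.prod_nonneg fun w h => by rwa [Finset.sum_neg_distrib, ← le_abs]
    _ ≤ _ := prob_or_le hq.prod_nonneg _ _
    _ ≤ Real.exp (-(N * δ ^ 2) / 2) + Real.exp (-(N * δ ^ 2) / 2) :=
        add_le_add (hq.prob_pi_ge_le hY hmean N hδ)
          (hq.prob_pi_ge_le (Y := fun x => -Y x) (by simpa using hY) (by simpa using hmean) N hδ)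
    _ = 2 * Real.exp (-(N * δ ^ 2) / 2) := by ring

variable [DecidableEq α]

theorem natCast_mul_empDist_sub {N : ℕ} (w : Fin N → α) (q : α → ℝ) (a : α) :
    (N : ℝ) * (empDist w a - q a) = ∑ j, ((if w j = a then 1 else 0) - q a) := by
  rcases N.eq_zero_or_pos with rfl | hN
  · simp
  · simp only [empDist, Finset.sum_sub_distrib, mul_sub, ← mul_assoc]
    field_simp
    simp

theorem IsPMF.prob_pi_lt_abs_sub_empDist_le {q : α → ℝ} (hq : IsPMF q) (a : α) (N : ℕ)
    {δ : ℝ} (hδ : 0 ≤ δ) :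
    prob (fun w : Fin N → α => ∏ j, q (w j)) (fun w => δ < |q a - empDist w a|) ≤
      2 * Real.exp (-(N * δ ^ 2) / 2) := by
  set Y : α → ℝ := fun x => (if x = a then 1 else 0) - q a
  have hY : ∀ x, |Y x| ≤ 1 := fun x => by
    have := hq.1 a
    have := hq.le_one a
    rw [abs_le]
    simp only [Y]
    constructor <;> split_ifs <;> linarith
  have hmean : ∑ x, q x * Y x = 0 := by
    simp [Y, mul_sub, Finset.sum_sub_distrib, ← Finset.sum_mul, hq.2]
  refine le_trans (prob_mono hq.prod_nonneg fun w h => ?_) (hq.prob_pi_le_abs_sum_le hY hmean N hδ)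
  rw [← natCast_mul_empDist_sub, abs_mul, Nat.abs_cast, abs_sub_comm]
  exact mul_le_mul_of_nonneg_left h.le (Nat.cast_nonneg N)

theorem IsPMF.prob_pi_lt_varDist_empDist_le {q : α → ℝ} (hq : IsPMF q) (N : ℕ) {ε : ℝ}
    (hε : 0 ≤ ε) :
    prob (fun w : Fin N → α => ∏ j, q (w j)) (fun w => ε < varDist q (empDist w)) ≤
      2 * Fintype.card α * Real.exp (-(N * ε ^ 2) / (2 * Fintype.card α ^ 2)) := by
  have := hq.nonempty
  have hcard : (0 : ℝ) < Fintype.card α := by positivity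
  calc _ ≤ prob (fun w : Fin N → α => ∏ j, q (w j))
          (fun w => ∃ a, ε / Fintype.card α < |q a - empDist w a|) :=
        prob_mono hq.prod_nonneg fun w => exists_lt_abs_sub_of_lt_varDist
    _ ≤ ∑ a, prob (fun w : Fin N → α => ∏ j, q (w j))
          (fun w => ε / Fintype.card α < |q a - empDist w a|) :=
        prob_exists_le_sum hq.prod_nonneg _
    _ ≤ ∑ _a : α, 2 * Real.exp (-(N * (ε / Fintype.card α) ^ 2) / 2) :=
        Finset.sum_le_sum fun a _ =>
          hq.prob_pi_lt_abs_sub_empDist_le a N (div_nonneg hε hcard.le)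
    _ = _ := by
        have hexponent : -(N * (ε / Fintype.card α) ^ 2) / 2 =
            -(N * ε ^ 2) / (2 * Fintype.card α ^ 2) := by
          field_simp
        rw [Finset.sum_const, Finset.card_univ, nsmul_eq_mul, hexponent]
        ring

end Concentration

section Blocks

variable {α : Type*} [Fintype α] [DecidableEq α] {k N : ℕ}

theorem natCast_mul_empDistBlocks (ω : Fin k → Fin N → α) (a : α) :
    (k : ℝ) * empDistBlocks ω a = ∑ i, empDist (ω i) a := by
  rcases k.eq_zero_or_pos with rfl | hk
  · simp
  · simp only [empDistBlocks, empDist, ← Finset.mul_sum, Nat.cast_mul, mul_inv, ← mul_assoc]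
    field_simp

theorem natCast_mul_varDist_empDistBlocks_le (q : α → ℝ) (ω : Fin k → Fin N → α) :
    (k : ℝ) * varDist q (empDistBlocks ω) ≤ ∑ i, varDist q (empDist (ω i)) := by
  simp only [varDist, Finset.mul_sum]
  rw [Finset.sum_comm]
  refine Finset.sum_le_sum fun a _ => ?_
  calc (k : ℝ) * |q a - empDistBlocks ω a| = |∑ i, (q a - empDist (ω i) a)| := by
        rw [Finset.sum_sub_distrib, ← natCast_mul_empDistBlocks, ← Nat.abs_cast k, ← abs_mul]
        simp [mul_sub]
    _ ≤ ∑ i, |q a - empDist (ω i) a| := Finset.abs_sum_le_sum_abs _ _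

theorem exists_lt_varDist_empDist_of_lt_varDist_empDistBlocks (hk : 0 < k) {q : α → ℝ}
    {ω : Fin k → Fin N → α} {ε : ℝ} (h : ε < varDist q (empDistBlocks ω)) :
    ∃ i, ε < varDist q (empDist (ω i)) := by
  have hsum : ∑ _i : Fin k, ε < ∑ i, varDist q (empDist (ω i)) := by
    rw [Finset.sum_const, Finset.card_univ, Fintype.card_fin, nsmul_eq_mul]
    exact (mul_lt_mul_of_pos_left h (by positivity)).trans_le
      (natCast_mul_varDist_empDistBlocks_le q ω)
  obtain ⟨i, -, hi⟩ := Finset.exists_lt_of_sum_lt hsum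
  exact ⟨i, hi⟩

end Blocks

theorem empirical_coordination_all_blocks_general
    {𝒳 𝒴 : Type*} [Fintype 𝒳] [Fintype 𝒴]
    [DecidableEq 𝒳] [DecidableEq 𝒴] {k N : ℕ} (hk : 1 ≤ k)
    (q : 𝒳 × 𝒴 → ℝ) (hq : IsPMF q)
    (ptilde : (Fin k → Fin N → 𝒳 × 𝒴) → ℝ) (hptilde : IsPMF ptilde)
    (ε : ℝ) (hε : 0 < ε) :
    (∑ ω : Fin k → Fin N → 𝒳 × 𝒴,
        if ε < varDist q (empDistBlocks ω) then ptilde ω else 0) ≤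
      ∑ i : Fin k,
        (varDist (pushforward ptilde (fun ω => ω i)) (fun w => ∏ j, q (w j)) +
          2 * (Fintype.card 𝒳 : ℝ) * (Fintype.card 𝒴 : ℝ) *
            Real.exp (-(N * ε ^ 2) /
              (2 * (Fintype.card 𝒳 : ℝ) ^ 2 * (Fintype.card 𝒴 : ℝ) ^ 2))) :=
  calc _ = prob ptilde (fun ω => ε < varDist q (empDistBlocks ω)) := rfl
    _ ≤ prob ptilde (fun ω => ∃ i, ε < varDist q (empDist (ω i))) :=
        prob_mono hptilde.1 fun _ => exists_lt_varDist_empDist_of_lt_varDist_empDistBlocks hk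
    _ ≤ ∑ i, prob ptilde (fun ω => ε < varDist q (empDist (ω i))) :=
        prob_exists_le_sum hptilde.1 _
    _ = ∑ i, prob (pushforward ptilde fun ω => ω i) (fun w => ε < varDist q (empDist w)) :=
        Finset.sum_congr rfl fun i _ =>
          prob_comp ptilde (fun ω => ω i) (fun w => ε < varDist q (empDist w))
    _ ≤ ∑ i, (varDist (pushforward ptilde fun ω => ω i) (fun w => ∏ j, q (w j)) +
          prob (fun w => ∏ j, q (w j)) (fun w => ε < varDist q (empDist w))) :=
        Finset.sum_le_sum fun i _ => prob_le_varDist_add _ _ _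
    _ ≤ _ := by
        gcongr
        refine (hq.prob_pi_lt_varDist_empDist_le N hε.le).trans_eq ?_
        simp only [Fintype.card_prod, Nat.cast_mul, mul_pow]
        ring_nf

/-- Abstract form of Lemma 8: for any pmf `p̃` on `((𝒳 × 𝒴)^N)^k` whose blocks
need not be independent, with block marginals `p̃ᵢ`,
`P_{p̃}[ V(q, T_all) > ε ] ≤ ∑ᵢ [ V(p̃ᵢ, q^{⊗N}) + 2|𝒳||𝒴| exp(−Nε²/(2|𝒳|²|𝒴|²)) ]`. -/
theorem empirical_coordination_all_blocks
    {𝒳 𝒴 : Type*} [Fintype 𝒳] [Fintype 𝒴] [Nonempty 𝒳] [Nonempty 𝒴]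
    [DecidableEq 𝒳] [DecidableEq 𝒴] {k N : ℕ} (hk : 1 ≤ k) (hN : 1 ≤ N)
    (q : 𝒳 × 𝒴 → ℝ) (hq : IsPMF q)
    (ptilde : (Fin k → Fin N → 𝒳 × 𝒴) → ℝ) (hptilde : IsPMF ptilde)
    (ε : ℝ) (hε : 0 < ε) :
    (∑ ω : Fin k → Fin N → 𝒳 × 𝒴,
        if ε < varDist q (empDistBlocks ω) then ptilde ω else 0) ≤
      ∑ i : Fin k,
        (varDist (pushforward ptilde (fun ω => ω i)) (fun w => ∏ j, q (w j)) +
          2 * (Fintype.card 𝒳 : ℝ) * (Fintype.card 𝒴 : ℝ) *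
            Real.exp (-(N * ε ^ 2) /
              (2 * (Fintype.card 𝒳 : ℝ) ^ 2 * (Fintype.card 𝒴 : ℝ) ^ 2))) :=
  empirical_coordination_all_blocks_general hk q hq ptilde hptilde ε hε
end
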